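/- arXiv:2108.09685 — 2 statements merged into one kernel-verified Lean document; each statement's English description precedes it below -/
import Mathlib

section
/- For every (z, φ) ∈ ℝ⁴ × ℝ with z ≠ 0, the following identity between vectors of ℝ⁴ holds at (z, φ): 𝔯³·J(∇^H𝔯) = ρ²·∇^Hφ − 2·φ·ρ·∇^Hρ = ρ⁴·∇^H(φ/ρ²), where φ also denotes the fifth coordinate function and ρ, 𝔯, ∇^H, J are as defined in the context. -/
open Real
noncomputable section

abbrev R4 : Type := EuclideanSpace ℝ (Fin 4)

/-- The Heisenberg group ℍ² as ℝ⁴ × ℝ, coordinates (z₁, z₂, z₃, z₄, φ). -/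
abbrev H2 : Type := R4 × ℝ

/-- The horizontal vector fields X₁, Y₁, X₂, Y₂ of ℍ², as vectors of ℝ⁴ × ℝ at a point:
`X₁ = ∂_{z₁} − z₂·∂_φ`, `Y₁ = ∂_{z₂} + z₁·∂_φ`, `X₂ = ∂_{z₃} − z₄·∂_φ`,
`Y₂ = ∂_{z₄} + z₃·∂_φ`. -/
def hvec : Fin 4 → H2 → H2
  | 0, p => (EuclideanSpace.single 0 1, -(p.1 1))
  | 1, p => (EuclideanSpace.single 1 1, p.1 0)
  | 2, p => (EuclideanSpace.single 2 1, -(p.1 3))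
  | 3, p => (EuclideanSpace.single 3 1, p.1 2)

/-- Derivative of `f` along the `k`-th horizontal vector field. -/
def hderiv (k : Fin 4) (f : H2 → ℝ) (p : H2) : ℝ := fderiv ℝ f p (hvec k p)

/-- The horizontal gradient `∇^H f = (X₁f, Y₁f, X₂f, Y₂f) ∈ ℝ⁴`. -/
def hGrad (f : H2 → ℝ) (p : H2) : R4 :=
  (WithLp.equiv 2 (Fin 4 → ℝ)).symm
    ![hderiv 0 f p, hderiv 1 f p, hderiv 2 f p, hderiv 3 f p]

/-- Standard complex structure on ℝ⁴ ≅ ℂ²: `J(a₁,a₂,a₃,a₄) = (−a₂,a₁,−a₄,a₃)`. -/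
def Jc (v : R4) : R4 := (WithLp.equiv 2 (Fin 4 → ℝ)).symm ![-v 1, v 0, -v 3, v 2]

/-- The Folland–Korányi gauge `𝔯(z,φ) = (|z|⁴ + 4φ²)^{1/4}`. -/
def kGauge (p : H2) : ℝ := (‖p.1‖ ^ 4 + 4 * p.2 ^ 2) ^ ((1:ℝ)/4)

/-!
Each of `φ`, `ρ`, `φ/ρ²` and `𝔯` has a differential of the form `w ↦ a⟪z, w_z⟫ + b w_φ`, and since
the horizontal field `X_k` is `(e_k, (Jz)_k)`, its horizontal gradient is `a z + b Jz`.
Differentiating `𝔯⁴ = ρ⁴ + 4φ²` gives `𝔯³ ∇^H𝔯 = ρ² z + 2φ Jz`, so `J² = -1` turns `𝔯³ J(∇^H𝔯)`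
into `ρ² Jz - 2φ z`.
The right-hand sides reduce to the same vector because `∇^Hφ = Jz`, `∇^Hρ = z/ρ` and
`∇^H(φ/ρ²) = -2φ z/ρ⁴ + Jz/ρ²`.
-/

theorem Jc_add (v w : R4) : Jc (v + w) = Jc v + Jc w := by
  ext i; fin_cases i <;> simp [Jc] <;> ring

theorem Jc_smul (c : ℝ) (v : R4) : Jc (c • v) = c • Jc v := by
  ext i; fin_cases i <;> simp [Jc]

theorem Jc_Jc (v : R4) : Jc (Jc v) = -v := by
  ext i; fin_cases i <;> simp [Jc]

theorem hvec_fst (k : Fin 4) (p : H2) : (hvec k p).1 = EuclideanSpace.single k 1 := by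
  fin_cases k <;> rfl

theorem hvec_snd (k : Fin 4) (p : H2) : (hvec k p).2 = Jc p.1 k := by
  fin_cases k <;> simp [hvec, Jc]

theorem hGrad_eq_of_hasFDerivAt {f : H2 → ℝ} {L : H2 →L[ℝ] ℝ} {p : H2} (hf : HasFDerivAt f L p)
    (a b : ℝ) (hL : ∀ w : H2, L w = a * inner ℝ p.1 w.1 + b * w.2) :
    hGrad f p = a • p.1 + b • Jc p.1 := by
  have hk : ∀ k, hderiv k f p = a * p.1 k + b * Jc p.1 k := fun k => by
    rw [hderiv, hf.fderiv, hL, hvec_fst, hvec_snd, EuclideanSpace.inner_single_right]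
    simp
  ext i; fin_cases i <;> simp [hGrad, hk]

theorem hasFDerivAt_norm_fst_sq (p : H2) :
    HasFDerivAt (fun q : H2 => ‖q.1‖ ^ 2)
      (2 • (innerSL ℝ p.1).comp (ContinuousLinearMap.fst ℝ R4 ℝ)) p :=
  hasFDerivAt_fst.norm_sq

theorem hGrad_snd (p : H2) : hGrad (fun q : H2 => q.2) p = Jc p.1 := by
  rw [hGrad_eq_of_hasFDerivAt hasFDerivAt_snd 0 1 (fun w => by simp)]
  simp

theorem hGrad_norm_fst {p : H2} (hp : p.1 ≠ 0) :
    hGrad (fun q : H2 => ‖q.1‖) p = ‖p.1‖⁻¹ • p.1 := by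
  have hsq : ‖p.1‖ ^ 2 ≠ 0 := by positivity
  have hf := (hasFDerivAt_norm_fst_sq p).sqrt hsq
  simp only [Real.sqrt_sq (norm_nonneg _)] at hf
  rw [hGrad_eq_of_hasFDerivAt hf ‖p.1‖⁻¹ 0 (fun w => by
    simp only [smul_apply, ContinuousLinearMap.comp_apply,
      ContinuousLinearMap.coe_fst', coe_innerSL_apply, nsmul_eq_mul, Nat.cast_ofNat, smul_eq_mul]
    field_simp
    ring)]
  simp

theorem hGrad_snd_div_norm_fst_sq {p : H2} (hp : p.1 ≠ 0) :
    hGrad (fun q : H2 => q.2 / ‖q.1‖ ^ 2) p =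
      (-2 * p.2 / ‖p.1‖ ^ 4) • p.1 + (‖p.1‖ ^ 2)⁻¹ • Jc p.1 := by
  have hsq : ‖p.1‖ ^ 2 ≠ 0 := by positivity
  have hf : HasFDerivAt (fun q : H2 => q.2 / ‖q.1‖ ^ 2) _ p :=
    (hasFDerivAt_snd.mul ((hasDerivAt_inv hsq).comp_hasFDerivAt p
      (hasFDerivAt_norm_fst_sq p))).congr_of_eventuallyEq (.of_forall fun q => div_eq_mul_inv _ _)
  refine hGrad_eq_of_hasFDerivAt hf _ _ (fun w => ?_)
  simp only [Function.comp_apply, add_apply, smul_apply, ContinuousLinearMap.comp_apply,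
    ContinuousLinearMap.coe_fst', ContinuousLinearMap.coe_snd', coe_innerSL_apply, nsmul_eq_mul,
    Nat.cast_ofNat, smul_eq_mul]
  field_simp

theorem norm_fst_pow_four_add_pos {p : H2} (hp : p ≠ 0) : 0 < ‖p.1‖ ^ 4 + 4 * p.2 ^ 2 := by
  rcases eq_or_ne p.1 0 with h | h
  · have : p.2 ≠ 0 := fun h2 => hp (Prod.ext h h2)
    rw [h, norm_zero]
    positivity
  · positivity

theorem kGauge_pow_three_smul_hGrad {p : H2} (hp : p ≠ 0) :
    kGauge p ^ 3 • hGrad kGauge p = ‖p.1‖ ^ 2 • p.1 + (2 * p.2) • Jc p.1 := by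
  have hg := norm_fst_pow_four_add_pos hp
  have hq : HasFDerivAt (fun q : H2 => ‖q.1‖ ^ 4 + 4 * q.2 ^ 2) _ p :=
    (((hasFDerivAt_norm_fst_sq p).pow 2).add
      ((hasFDerivAt_snd.pow 2).const_mul 4)).congr_of_eventuallyEq
      (.of_forall fun q => by simp only [Pi.add_apply]; ring)
  have hcancel : kGauge p ^ 3 * (‖p.1‖ ^ 4 + 4 * p.2 ^ 2) ^ ((1:ℝ) / 4 - 1) = 1 := by
    rw [kGauge, ← Real.rpow_natCast, ← Real.rpow_mul hg.le, ← Real.rpow_add hg]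
    norm_num
  rw [hGrad_eq_of_hasFDerivAt (f := kGauge) (hq.rpow_const (p := 1 / 4) (Or.inl hg.ne'))
      ((‖p.1‖ ^ 4 + 4 * p.2 ^ 2) ^ ((1:ℝ) / 4 - 1) * ‖p.1‖ ^ 2)
      (2 * p.2 * (‖p.1‖ ^ 4 + 4 * p.2 ^ 2) ^ ((1:ℝ) / 4 - 1)) (fun w => by
        simp only [smul_apply, add_apply, ContinuousLinearMap.comp_apply,
          ContinuousLinearMap.coe_fst', ContinuousLinearMap.coe_snd', coe_innerSL_apply,
          nsmul_eq_mul, Nat.cast_ofNat, smul_eq_mul]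
        ring)]
  match_scalars
  · linear_combination ‖p.1‖ ^ 2 * hcancel
  · linear_combination 2 * p.2 * hcancel

/-- Equation (kora-36) of the paper (with the orientation convention
`J(a₁,a₂,a₃,a₄) = (−a₂,a₁,−a₄,a₃)`): for `z ≠ 0`,
`𝔯³·J(∇^H𝔯) = ρ²·∇^Hφ − 2φρ·∇^Hρ = ρ⁴·∇^H(φ/ρ²)`. -/
theorem gauge_gradient_rotation (p : H2) (hp : p.1 ≠ 0) :
    (kGauge p) ^ 3 • Jc (hGrad kGauge p) =
        ‖p.1‖ ^ 2 • hGrad (fun q : H2 => q.2) p -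
          (2 * p.2 * ‖p.1‖) • hGrad (fun q : H2 => ‖q.1‖) p ∧
    (kGauge p) ^ 3 • Jc (hGrad kGauge p) =
        ‖p.1‖ ^ 4 • hGrad (fun q : H2 => q.2 / ‖q.1‖ ^ 2) p := by
  have hlhs : kGauge p ^ 3 • Jc (hGrad kGauge p) = ‖p.1‖ ^ 2 • Jc p.1 - (2 * p.2) • p.1 := by
    rw [← Jc_smul, kGauge_pow_three_smul_hGrad (fun h => hp (congrArg Prod.fst h)), Jc_add,
      Jc_smul, Jc_smul, Jc_Jc]
    module
  rw [hlhs, hGrad_snd, hGrad_norm_fst hp, hGrad_snd_div_norm_fst_sq hp]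
  constructor <;> match_scalars <;> field_simp
end
end

section
/- The function h : ℝ → ℝ defined by h(σ) = (σ·arctan σ + 1)/√(1+σ²) is differentiable with h′(σ) = arctan σ/(1+σ²)^{3/2} for every σ ∈ ℝ, and satisfies 1 ≤ h(σ) ≤ π/2 for every σ ∈ ℝ. -/
/-!
Both bounds come from `sin x ≤ x` at `x = arctan t`, i.e. `t / √(1+t²) ≤ arctan t` for `t ≥ 0`.
With `S = √(1+σ²)`, this gives `σ arctan σ ≥ σ² / S`, and then `h ≥ 1` amounts to `S ≥ 1`.
Applied at `1/t`, via `arctan t = π/2 - arctan (1/t)`, it gives `σ arctan σ ≤ |σ| (π/2 - 1/S)`,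
and then `π/2 - h = (S - |σ|)(π/2 - 1/S) / S ≥ 0`.
-/

open Real

lemma div_sqrt_one_add_sq_le_arctan {x : ℝ} (hx : 0 ≤ x) : x / √(1 + x ^ 2) ≤ arctan x := by
  simpa only [sin_arctan] using sin_le (arctan_nonneg.2 hx)

lemma arctan_le_pi_div_two_sub {t : ℝ} (ht : 0 < t) : arctan t ≤ π / 2 - 1 / √(1 + t ^ 2) := by
  have h := div_sqrt_one_add_sq_le_arctan (inv_nonneg.2 ht.le)
  have hsqrt : √(1 + t⁻¹ ^ 2) = √(1 + t ^ 2) / t := by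
    rw [show 1 + t⁻¹ ^ 2 = (1 + t ^ 2) / t ^ 2 by field_simp; ring, sqrt_div' _ (sq_nonneg t),
      sqrt_sq ht.le]
  rw [arctan_inv_of_pos ht, hsqrt] at h
  have : t⁻¹ / (√(1 + t ^ 2) / t) = 1 / √(1 + t ^ 2) := by field_simp
  linarith

lemma mul_arctan_eq_abs_mul_arctan_abs (σ : ℝ) : σ * arctan σ = |σ| * arctan |σ| := by
  rcases abs_cases σ with ⟨h, -⟩ | ⟨h, -⟩ <;> rw [h]
  rw [arctan_neg, neg_mul_neg]

lemma sq_div_sqrt_one_add_sq_le_mul_arctan (σ : ℝ) :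
    σ ^ 2 / √(1 + σ ^ 2) ≤ σ * arctan σ := by
  rw [mul_arctan_eq_abs_mul_arctan_abs, ← sq_abs σ]
  calc |σ| ^ 2 / √(1 + |σ| ^ 2) = |σ| * (|σ| / √(1 + |σ| ^ 2)) := by ring
    _ ≤ |σ| * arctan |σ| :=
      mul_le_mul_of_nonneg_left (div_sqrt_one_add_sq_le_arctan (abs_nonneg σ)) (abs_nonneg σ)

lemma mul_arctan_le_abs_mul (σ : ℝ) : σ * arctan σ ≤ |σ| * (π / 2 - 1 / √(1 + σ ^ 2)) := by
  rw [mul_arctan_eq_abs_mul_arctan_abs, ← sq_abs σ]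
  rcases (abs_nonneg σ).eq_or_lt with h | h
  · simp [← h]
  · exact mul_le_mul_of_nonneg_left (arctan_le_pi_div_two_sub h) h.le

lemma hasDerivAt_sqrt_one_add_sq (σ : ℝ) :
    HasDerivAt (fun s : ℝ => √(1 + s ^ 2)) (σ / √(1 + σ ^ 2)) σ := by
  have h := ((hasDerivAt_pow 2 σ).const_add 1).sqrt (by positivity)
  convert h using 1
  field_simp
  norm_num [mul_comm]

lemma one_add_sq_rpow_three_halves (σ : ℝ) :
    (1 + σ ^ 2) ^ ((3 : ℝ) / 2) = √(1 + σ ^ 2) ^ 3 := by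
  rw [sqrt_eq_rpow, ← rpow_natCast ((1 + σ ^ 2) ^ ((1 : ℝ) / 2)) 3, ← rpow_mul (by positivity)]
  norm_num

lemma hasDerivAt_arctan_weight (σ : ℝ) :
    HasDerivAt (fun s : ℝ => (s * arctan s + 1) / √(1 + s ^ 2))
      (arctan σ / (1 + σ ^ 2) ^ ((3 : ℝ) / 2)) σ := by
  have hS : 0 < √(1 + σ ^ 2) := by positivity
  have hS2 : √(1 + σ ^ 2) ^ 2 = 1 + σ ^ 2 := sq_sqrt (by positivity)
  have hnum := ((hasDerivAt_id' σ).fun_mul (hasDerivAt_arctan σ)).add_const 1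
  refine (hnum.div (hasDerivAt_sqrt_one_add_sq σ) hS.ne').congr_deriv ?_
  rw [one_add_sq_rpow_three_halves]
  field_simp
  linear_combination (arctan σ * (1 + σ ^ 2) + σ) * hS2

lemma one_le_arctan_weight (σ : ℝ) : 1 ≤ (σ * arctan σ + 1) / √(1 + σ ^ 2) := by
  have hS : 0 < √(1 + σ ^ 2) := by positivity
  have hS1 : 1 ≤ √(1 + σ ^ 2) := one_le_sqrt.2 (by nlinarith)
  have hS2 : √(1 + σ ^ 2) ^ 2 = 1 + σ ^ 2 := sq_sqrt (by positivity)
  have hS_le : √(1 + σ ^ 2) ≤ σ ^ 2 / √(1 + σ ^ 2) + 1 := by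
    rw [div_add_one hS.ne', le_div_iff₀ hS]
    nlinarith
  rw [le_div_iff₀ hS, one_mul]
  linarith [sq_div_sqrt_one_add_sq_le_mul_arctan σ]

lemma arctan_weight_le_pi_div_two (σ : ℝ) : (σ * arctan σ + 1) / √(1 + σ ^ 2) ≤ π / 2 := by
  set S := √(1 + σ ^ 2)
  have hS : 0 < S := by positivity
  have hS1 : 1 ≤ S := one_le_sqrt.2 (by nlinarith)
  have habs : |σ| ≤ S := by rw [← sqrt_sq_eq_abs]; exact sqrt_le_sqrt (by linarith)
  have hfactor : 0 ≤ (S - |σ|) * (π / 2 - 1 / S) := by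
    have : 1 / S ≤ 1 := by rw [div_le_one hS]; exact hS1
    exact mul_nonneg (by linarith) (by linarith [pi_gt_three])
  have hexpand : (S - |σ|) * (π / 2 - 1 / S) = π / 2 * S - (|σ| * (π / 2 - 1 / S) + 1) := by
    field_simp
    ring
  rw [div_le_iff₀ hS]
  linarith [mul_arctan_le_abs_mul σ]

/-- Equations (k-18-rep) and (k-19-rep) of the paper: the function
`h(σ) = (σ·arctan σ + 1)/√(1+σ²)` has derivative `arctan σ/(1+σ²)^{3/2}` and satisfies
`1 ≤ h ≤ π/2` on ℝ. -/
theorem arctan_weight_bounds :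
    (∀ σ : ℝ, HasDerivAt (fun s : ℝ => (s * Real.arctan s + 1) / Real.sqrt (1 + s ^ 2))
      (Real.arctan σ / (1 + σ ^ 2) ^ ((3:ℝ)/2)) σ) ∧
    (∀ σ : ℝ, 1 ≤ (σ * Real.arctan σ + 1) / Real.sqrt (1 + σ ^ 2) ∧
      (σ * Real.arctan σ + 1) / Real.sqrt (1 + σ ^ 2) ≤ π / 2) :=
  ⟨hasDerivAt_arctan_weight, fun σ => ⟨one_le_arctan_weight σ, arctan_weight_le_pi_div_two σ⟩⟩
end
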